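/- Let H be a Hopf algebra and B a left s-unital partial H-module algebra. If M is a unital left (underlined) B#H-module, then M becomes a partial (B,H)-module via the induced B-action a·m = (a#1_H)▷m and the H-action hm = Σ (h₁·x)#h₂ ▷ m, where x ∈ B satisfies xm = m. Conversely, every partial (B,H)-module is a unital (underlined) B#H-module via Σ a(h₁·b)#h₂ ▷ m = a(h·(bm)). -/

import Mathlib

open TensorProduct

section PartialHopfPrelude

variable (k : Type) [Field k] (H : Type) [Ring H] [HopfAlgebra k H]

/-- Sweedler-style sum `Σ f h₁ h₂` over the comultiplication of `h`. -/
noncomputable def sweedler {M : Type} [AddCommGroup M] [Module k M]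
    (f : H →ₗ[k] H →ₗ[k] M) (h : H) : M :=
  TensorProduct.lift f (Coalgebra.comul h)

variable {A : Type} [AddCommGroup A] [Module k A]

/-- `Σ (h₁ · a) * (h₂ g · b)`, with an explicit multiplication `mA` on `A`. -/
noncomputable def paRhs (mA : A →ₗ[k] A →ₗ[k] A) (act : H →ₗ[k] A →ₗ[k] A)
    (h g : H) (a b : A) : A :=
  sweedler k H ((mA.comp (act.flip a)).compl₂ ((act.flip b).comp (LinearMap.mulRight k g))) h

/-- `Σ (h₁ g · b) * (h₂ · a)`, with an explicit multiplication `mA` on `A`. -/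
noncomputable def paSymmRhs (mA : A →ₗ[k] A →ₗ[k] A) (act : H →ₗ[k] A →ₗ[k] A)
    (h g : H) (a b : A) : A :=
  sweedler k H ((mA.comp ((act.flip b).comp (LinearMap.mulRight k g))).compl₂ (act.flip a)) h

/-- A (left) partial action of the Hopf algebra `H` on `A`, where the (possibly nonunital,
possibly nonassociative) multiplication of `A` is given explicitly as a bilinear map `mA`:
`1_H · a = a` and `h · (a (g · b)) = Σ (h₁ · a)(h₂ g · b)`. -/
structure IsPartialActionOn (mA : A →ₗ[k] A →ₗ[k] A) (act : H →ₗ[k] A →ₗ[k] A) : Prop where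
  one_act : ∀ a : A, act 1 a = a
  act_assoc : ∀ (h g : H) (a b : A), act h (mA a (act g b)) = paRhs k H mA act h g a b

/-- A symmetrical partial action: additionally `h · ((g · b) a) = Σ (h₁ g · b)(h₂ · a)`. -/
structure IsSymmPartialActionOn (mA : A →ₗ[k] A →ₗ[k] A) (act : H →ₗ[k] A →ₗ[k] A)
    extends IsPartialActionOn k H mA act : Prop where
  act_symm : ∀ (h g : H) (a b : A), act h (mA (act g b) a) = paSymmRhs k H mA act h g a b

variable {B : Type} [NonUnitalRing B] [Module k B] [SMulCommClass k B B] [IsScalarTower k B B]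

/-- A partial action of `H` on the nonunital algebra `B` (with its own multiplication). -/
def IsPartialAction (act : H →ₗ[k] B →ₗ[k] B) : Prop :=
  IsPartialActionOn k H (LinearMap.mul k B) act

/-- A symmetrical partial action of `H` on the nonunital algebra `B`. -/
def IsSymmPartialAction (act : H →ₗ[k] B →ₗ[k] B) : Prop :=
  IsSymmPartialActionOn k H (LinearMap.mul k B) act

end PartialHopfPrelude

section Stmt9

variable {k : Type} [Field k] {H : Type} [Ring H] [HopfAlgebra k H]
variable {B : Type} [NonUnitalRing B] [Module k B] [SMulCommClass k B B] [IsScalarTower k B B]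

/-- `Σ a (h₁ · b) ⊗ (h₂ g)`, the smash product multiplication on elementary tensors. -/
noncomputable def smashAux (act : H →ₗ[k] B →ₗ[k] B) (a : B) (h : H) (b : B) (g : H) :
    B ⊗[k] H :=
  TensorProduct.map ((LinearMap.mulLeft k a).comp (act.flip b)) (LinearMap.mulRight k g)
    (Coalgebra.comul h)

/-- `Σ (h₁ · a) ((h₂ g) m)` for a left `B`-action `σ` and `H`-action `χ` on `M`. -/
noncomputable def pbhRhs {M : Type} [AddCommGroup M] [Module k M]
    (act : H →ₗ[k] B →ₗ[k] B) (σ : B →ₗ[k] M →ₗ[k] M) (χ : H →ₗ[k] M →ₗ[k] M)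
    (h g : H) (a : B) (m : M) : M :=
  sweedler k H ((σ.comp (act.flip a)).compl₂
    ((χ.flip m).comp (LinearMap.mulRight k g))) h

end Stmt9

/-!
In a unital module over the partial smash product, s-unitality of `B` gives every `m` a local
unit: some `x ∈ B` with `(x # 1) m = m`, and any two elements of `B` have a common left unit.
Since `(Σ (h₁·e) # h₂)(x # 1) = Σ (h₁·x) # h₂` whenever `e x = x`, the element
`(Σ (h₁·x) # h₂) m` does not depend on the local unit `x`; this defines `h m`. The partial module
axiom for this action comes down to an identity in `B ⊗ H`, obtained from the partial action
axiom, coassociativity and multiplicativity of `Δ`. Conversely, `(a # h) m := a (h m)` is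
multiplicative by the partial module axiom, and `b # 1 = (x # 1)(b # 1)` for `x b = b` shows
that it is unital over the partial smash product.
-/

namespace PartialSmash

open Coalgebra LinearMap

theorem exists_common_left_unit {R : Type*} [NonUnitalRing R] (hR : ∀ b : R, ∃ x : R, x * b = b)
    (a b : R) : ∃ e : R, e * a = a ∧ e * b = b := by
  obtain ⟨e₁, h₁⟩ := hR a
  obtain ⟨e₂, h₂⟩ := hR (b - e₁ * b)
  -- formally `1 - e = (1 - e₂)(1 - e₁)`, which kills both `a` and `b`
  refine ⟨e₁ + e₂ - e₂ * e₁, ?_, ?_⟩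
  · rw [sub_mul, add_mul, mul_assoc, h₁]; abel
  · rw [sub_mul, add_mul, mul_assoc, add_sub_assoc, ← mul_sub, h₂]; abel

variable {k : Type} [Field k]

theorem _root_.TensorProduct.map_lift_assoc_symm_tmul {X Y Z W N : Type}
    [AddCommGroup X] [Module k X] [AddCommGroup Y] [Module k Y] [AddCommGroup Z] [Module k Z]
    [AddCommGroup W] [Module k W] [AddCommGroup N] [Module k N]
    (m : X →ₗ[k] Y →ₗ[k] N) (r : Z →ₗ[k] W) (u : X) (y : Y ⊗[k] Z) :
    map (lift m) r ((TensorProduct.assoc k X Y Z).symm (u ⊗ₜ y)) = map (m u) r y := by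
  induction y using TensorProduct.induction_on with
  | zero => simp
  | tmul v s => simp
  | add y₁ y₂ ih₁ ih₂ => simp only [tmul_add, map_add, ih₁, ih₂]

variable {H : Type} [Ring H] [HopfAlgebra k H] {B : Type} [NonUnitalRing B] [Module k B]
variable {M : Type} [AddCommGroup M] [Module k M]

/-- `actComul act x h = Σ (h₁·x) ⊗ h₂`, standing for `(1 # h)(x # 1)` although `B` has no unit. -/
noncomputable def actComul (act : H →ₗ[k] B →ₗ[k] B) (x : B) : H →ₗ[k] B ⊗[k] H :=
  map (act.flip x) id ∘ₗ comul

theorem actComul_apply {act : H →ₗ[k] B →ₗ[k] B} (x : B) (h : H) :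
    actComul act x h = map (act.flip x) id (comul h) :=
  rfl

noncomputable def smashActionOf (σ : B →ₗ[k] M →ₗ[k] M) (χ : H →ₗ[k] M →ₗ[k] M) :
    (B ⊗[k] H) →ₗ[k] M →ₗ[k] M :=
  lift ((llcomp k M M M ∘ₗ σ).compl₂ χ)

@[simp]
theorem smashActionOf_tmul {σ : B →ₗ[k] M →ₗ[k] M} {χ : H →ₗ[k] M →ₗ[k] M} (b : B) (h : H)
    (m : M) : smashActionOf σ χ (b ⊗ₜ[k] h) m = σ b (χ h m) :=
  rfl

variable [SMulCommClass k B B]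

def IsSmashMul (act : H →ₗ[k] B →ₗ[k] B)
    (μ : (B ⊗[k] H) →ₗ[k] (B ⊗[k] H) →ₗ[k] (B ⊗[k] H)) : Prop :=
  ∀ (a : B) (h : H) (b : B) (g : H), μ (a ⊗ₜ[k] h) (b ⊗ₜ[k] g) = smashAux act a h b g

variable {act : H →ₗ[k] B →ₗ[k] B} {μ : (B ⊗[k] H) →ₗ[k] (B ⊗[k] H) →ₗ[k] (B ⊗[k] H)}
variable {σ : B →ₗ[k] M →ₗ[k] M} {χ : H →ₗ[k] M →ₗ[k] M}

theorem smashActionOf_smash (hμ : IsSmashMul act μ)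
    (hσ : ∀ (b c : B) (m : M), σ (b * c) m = σ b (σ c m))
    (hlaw : ∀ (h g : H) (a : B) (m : M), χ h (σ a (χ g m)) = pbhRhs act σ χ h g a m)
    (u v : B ⊗[k] H) (m : M) :
    smashActionOf σ χ (μ u v) m = smashActionOf σ χ u (smashActionOf σ χ v m) := by
  induction u using TensorProduct.induction_on with
  | zero => simp
  | add u₁ u₂ ih₁ ih₂ => simp only [map_add, LinearMap.add_apply, ih₁, ih₂]
  | tmul a h =>
    induction v using TensorProduct.induction_on with
    | zero => simp
    | add v₁ v₂ ih₁ ih₂ => simp only [map_add, LinearMap.add_apply, ih₁, ih₂]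
    | tmul b g =>
      have hsweedler : (smashActionOf σ χ).flip m ∘ₗ
          map ((mulLeft k a).comp (act.flip b)) (mulRight k g) =
          σ a ∘ₗ lift ((σ.comp (act.flip b)).compl₂ ((χ.flip m).comp (mulRight k g))) :=
        TensorProduct.ext' fun u t => by simp [hσ]
      rw [hμ, smashAux, smashActionOf_tmul, smashActionOf_tmul, hlaw]
      exact LinearMap.congr_fun hsweedler (comul h)

variable [IsScalarTower k B B]

/-- Sweedler form: `Σ h₁·(a (g·b)) ⊗ r h₂ = Σ (h₁·a)(h₂g·b) ⊗ r h₃`. -/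
theorem _root_.IsPartialAction.map_flip_mul_act_comul (hpa : IsPartialAction k H act)
    (a b : B) (g : H) {N : Type} [AddCommGroup N] [Module k N] (r : H →ₗ[k] N) (h : H) :
    map (act.flip (a * act g b)) r (comul h) =
      map (lift (((mul k B).comp (act.flip a)).compl₂ ((act.flip b).comp (mulRight k g)))) r
        ((TensorProduct.assoc k H H H).symm (comul.lTensor H (comul h))) := by
  have hflip : act.flip (a * act g b) =
      lift (((mul k B).comp (act.flip a)).compl₂ ((act.flip b).comp (mulRight k g))) ∘ₗ comul :=
    LinearMap.ext fun u => hpa.act_assoc u g a b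
  rw [hflip, ← LinearMap.map_rTensor, coassoc_symm_apply]

theorem actComul_one (hpa : IsPartialAction k H act) (x : B) :
    actComul act x 1 = x ⊗ₜ[k] (1 : H) := by
  simp [actComul, Bialgebra.comul_one, Algebra.TensorProduct.one_def, hpa.one_act]

theorem smash_tmul_one_left (hpa : IsPartialAction k H act) (hμ : IsSmashMul act μ) (a : B)
    (z : B ⊗[k] H) : μ (a ⊗ₜ[k] 1) z = map (mulLeft k a) id z := by
  induction z using TensorProduct.induction_on with
  | zero => simp
  | tmul b g =>
      rw [hμ, smashAux, Bialgebra.comul_one, Algebra.TensorProduct.one_def]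
      simp [hpa.one_act]
  | add z₁ z₂ ih₁ ih₂ => simp only [map_add, ih₁, ih₂]

theorem smash_tmul_one_tmul_one (hpa : IsPartialAction k H act) (hμ : IsSmashMul act μ)
    (a b : B) : μ (a ⊗ₜ[k] 1) (b ⊗ₜ[k] 1) = (a * b) ⊗ₜ[k] (1 : H) := by
  simp [smash_tmul_one_left hpa hμ]

theorem smash_tmul_one_smash_tmul_one (hpa : IsPartialAction k H act) (hμ : IsSmashMul act μ)
    (a b : B) (z : B ⊗[k] H) : μ (a ⊗ₜ[k] 1) (μ (b ⊗ₜ[k] 1) z) = μ ((a * b) ⊗ₜ[k] 1) z := by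
  rw [smash_tmul_one_left hpa hμ, smash_tmul_one_left hpa hμ, smash_tmul_one_left hpa hμ,
    map_map, mulLeft_mul, id_comp]

theorem smash_tmul_tmul_one (hpa : IsPartialAction k H act) (hμ : IsSmashMul act μ)
    (a : B) (h : H) (b : B) : μ (a ⊗ₜ[k] h) (b ⊗ₜ[k] 1) = μ (a ⊗ₜ[k] 1) (actComul act b h) := by
  rw [hμ, smashAux, mulRight_one, smash_tmul_one_left hpa hμ, actComul_apply, map_map, id_comp]

theorem smash_actComul_tmul (hpa : IsPartialAction k H act) (hμ : IsSmashMul act μ)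
    (e : B) (h : H) (b : B) (g : H) :
    μ (actComul act e h) (b ⊗ₜ[k] g) = map (act.flip (e * b)) (mulRight k g) (comul h) := by
  have hsweedler := hpa.map_flip_mul_act_comul e b 1 (mulRight k g) h
  rw [hpa.one_act] at hsweedler
  rw [hsweedler, actComul_apply]
  generalize comul (R := k) h = z
  induction z using TensorProduct.induction_on with
  | zero => simp
  | tmul u t =>
      rw [map_tmul, lTensor_tmul, map_lift_assoc_symm_tmul, hμ, smashAux]
      congr 1
      ext c
      simp
  | add z₁ z₂ ih₁ ih₂ => simp only [map_add, LinearMap.add_apply, ih₁, ih₂]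

/-- The partial module axiom inside `B ⊗ H`: if `e a = a`, then
`(Σ (h₁·e) # h₂)(a # 1)(Σ (g₁·x) # g₂) = Σ (h₁·a # 1)(Σ ((h₂g)₁·x) # (h₂g)₂)`. -/
theorem smash_actComul_smash_tmul_one_actComul (hpa : IsPartialAction k H act)
    (hμ : IsSmashMul act μ) (h g : H) {e a : B} (hea : e * a = a) (x : B) :
    μ (actComul act e h) (μ (a ⊗ₜ[k] 1) (actComul act x g)) =
      lift (((μ.comp ((TensorProduct.mk k B H).flip 1)).comp (act.flip a)).compl₂
        ((actComul act x).comp (mulRight k g))) (comul h) := by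
  -- `G z` is the right-hand side with `Δ g` replaced by `z`, so that we can induct on `Δ g`.
  let G : H ⊗[k] H → H →ₗ[k] H →ₗ[k] B ⊗[k] H := fun z =>
    ((μ.comp ((TensorProduct.mk k B H).flip 1)).comp (act.flip a)).compl₂
      ((map (act.flip x) id).comp ((mulRight k z).comp comul))
  have hG : ((μ.comp ((TensorProduct.mk k B H).flip 1)).comp (act.flip a)).compl₂
      ((actComul act x).comp (mulRight k g)) = G (comul g) := by
    ext u t
    simp [G, actComul, Bialgebra.comul_mul]
  rw [hG, smash_tmul_one_left hpa hμ, actComul_apply x g, map_map, id_comp]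
  induction comul (R := k) g using TensorProduct.induction_on with
  | zero =>
      have : G 0 = 0 := by ext; simp [G]
      rw [this, map_zero, map_zero]
      exact (LinearMap.congr_fun (map_zero (uncurry _ _ _ _)) _).symm
  | add z₁ z₂ ih₁ ih₂ =>
      have : G (z₁ + z₂) = G z₁ + G z₂ := by ext; simp [G, mul_add]
      rw [map_add, map_add, ih₁, ih₂, this]
      exact (LinearMap.congr_fun (map_add (uncurry _ _ _ _) _ _) _).symm
  | tmul g₁ g₂ =>
      rw [map_tmul, comp_apply, flip_apply, mulLeft_apply, id_apply, smash_actComul_tmul hpa hμ,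
        ← mul_assoc, hea, hpa.map_flip_mul_act_comul]
      induction comul (R := k) h using TensorProduct.induction_on with
      | zero => simp
      | add w₁ w₂ ih₁ ih₂ => simp only [map_add, ih₁, ih₂]
      | tmul u t =>
          rw [lTensor_tmul, map_lift_assoc_symm_tmul, lift.tmul]
          simp only [G, compl₂_apply, comp_apply, flip_apply, TensorProduct.mk_apply,
            smash_tmul_one_left hpa hμ, mulRight_tmul, map_map]
          rfl

section OfSmashModule

variable {ρ : (B ⊗[k] H) →ₗ[k] M →ₗ[k] M}

theorem tmul_one_act_eq_self_of_mul_eq (hpa : IsPartialAction k H act) (hμ : IsSmashMul act μ)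
    (hρ : ∀ (u v : B ⊗[k] H) (m : M), ρ (μ u v) m = ρ u (ρ v m)) {p e : B} {m : M}
    (hp : ρ (p ⊗ₜ[k] 1) m = m) (hep : e * p = p) : ρ (e ⊗ₜ[k] 1) m = m := by
  rw [← hp, ← hρ, smash_tmul_one_tmul_one hpa hμ, hep]

theorem actComul_act_eq_of_mul_eq (hpa : IsPartialAction k H act) (hμ : IsSmashMul act μ)
    (hρ : ∀ (u v : B ⊗[k] H) (m : M), ρ (μ u v) m = ρ u (ρ v m)) {x e : B} {m : M}
    (hx : ρ (x ⊗ₜ[k] 1) m = m) (hex : e * x = x) (h : H) :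
    ρ (actComul act x h) m = ρ (actComul act e h) m := by
  have hunit : μ (actComul act e h) (x ⊗ₜ[k] 1) = actComul act x h := by
    rw [smash_actComul_tmul hpa hμ, hex, mulRight_one, actComul_apply]
  rw [← hunit, hρ, hx]

theorem actComul_act_eq_of_tmul_one_act_eq (hpa : IsPartialAction k H act)
    (hμ : IsSmashMul act μ) (hρ : ∀ (u v : B ⊗[k] H) (m : M), ρ (μ u v) m = ρ u (ρ v m))
    (hsu : ∀ b : B, ∃ x : B, x * b = b) {x y : B} {m : M}
    (hx : ρ (x ⊗ₜ[k] 1) m = m) (hy : ρ (y ⊗ₜ[k] 1) m = m) (h : H) :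
    ρ (actComul act x h) m = ρ (actComul act y h) m := by
  obtain ⟨e, hex, hey⟩ := exists_common_left_unit hsu x y
  rw [actComul_act_eq_of_mul_eq hpa hμ hρ hx hex, actComul_act_eq_of_mul_eq hpa hμ hρ hy hey]

theorem mem_span_tmul_one_act (hpa : IsPartialAction k H act) (hμ : IsSmashMul act μ)
    (hρ : ∀ (u v : B ⊗[k] H) (m : M), ρ (μ u v) m = ρ u (ρ v m)) (m : M)
    (hm : m ∈ Submodule.span k {x : M | ∃ p ∈ Submodule.span k
      {x : B ⊗[k] H | ∃ (u : B ⊗[k] H) (b : B), x = μ u (b ⊗ₜ[k] (1 : H))}, ∃ m' : M, x = ρ p m'}) :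
    m ∈ Submodule.span k {x : M | ∃ (b : B) (m' : M), x = ρ (b ⊗ₜ[k] (1 : H)) m'} := by
  set S := Submodule.span k {x : M | ∃ (b : B) (m' : M), x = ρ (b ⊗ₜ[k] (1 : H)) m'}
  let T : Submodule k (B ⊗[k] H) := ⨅ m' : M, S.comap (ρ.flip m')
  have hgen : ∀ (u : B ⊗[k] H) (b : B), μ u (b ⊗ₜ[k] 1) ∈ T := by
    intro u b
    induction u using TensorProduct.induction_on with
    | zero => simp
    | tmul a h =>
        refine Submodule.mem_iInf _ |>.mpr fun m' => ?_
        rw [Submodule.mem_comap, flip_apply, smash_tmul_tmul_one hpa hμ, hρ]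
        exact Submodule.subset_span ⟨a, _, rfl⟩
    | add u₁ u₂ ih₁ ih₂ => simpa only [map_add, LinearMap.add_apply] using T.add_mem ih₁ ih₂
  refine Submodule.span_le.mpr ?_ hm
  rintro _ ⟨p, hp, m', rfl⟩
  have hpT : p ∈ T := Submodule.span_le.mpr (by rintro _ ⟨u, b, rfl⟩; exact hgen u b) hp
  exact Submodule.mem_iInf _ |>.mp hpT m'

theorem exists_tmul_one_act_eq_self (hpa : IsPartialAction k H act) (hμ : IsSmashMul act μ)
    (hρ : ∀ (u v : B ⊗[k] H) (m : M), ρ (μ u v) m = ρ u (ρ v m))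
    (hsu : ∀ b : B, ∃ x : B, x * b = b) (m : M)
    (hm : m ∈ Submodule.span k {x : M | ∃ (b : B) (m' : M), x = ρ (b ⊗ₜ[k] (1 : H)) m'}) :
    ∃ x : B, ρ (x ⊗ₜ[k] 1) m = m := by
  induction hm using Submodule.span_induction with
  | mem y hy =>
      obtain ⟨b, m', rfl⟩ := hy
      obtain ⟨x, hx⟩ := hsu b
      exact ⟨x, by rw [← hρ, smash_tmul_one_tmul_one hpa hμ, hx]⟩
  | zero => exact ⟨0, map_zero _⟩
  | add y z _ _ hy hz =>
      obtain ⟨p, hp⟩ := hy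
      obtain ⟨q, hq⟩ := hz
      obtain ⟨e, hep, heq⟩ := exists_common_left_unit hsu p q
      refine ⟨e, ?_⟩
      rw [map_add, tmul_one_act_eq_self_of_mul_eq hpa hμ hρ hp hep,
        tmul_one_act_eq_self_of_mul_eq hpa hμ hρ hq heq]
  | smul c y _ hy =>
      obtain ⟨p, hp⟩ := hy
      exact ⟨p, by rw [map_smul, hp]⟩

theorem exists_eq_actComul_act (hpa : IsPartialAction k H act)
    (hμ : IsSmashMul act μ) (hρ : ∀ (u v : B ⊗[k] H) (m : M), ρ (μ u v) m = ρ u (ρ v m))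
    (hsu : ∀ b : B, ∃ x : B, x * b = b) (hloc : ∀ m : M, ∃ x : B, ρ (x ⊗ₜ[k] 1) m = m) :
    ∃ χ : H →ₗ[k] M →ₗ[k] M, ∀ (h : H) (m : M) (x : B),
      ρ (x ⊗ₜ[k] 1) m = m → χ h m = ρ (actComul act x h) m := by
  choose u hu using hloc
  have indep {x y : B} {m : M} (hx : ρ (x ⊗ₜ[k] 1) m = m) (hy : ρ (y ⊗ₜ[k] 1) m = m) (h : H) :=
    actComul_act_eq_of_tmul_one_act_eq hpa hμ hρ hsu hx hy h
  refine ⟨LinearMap.mk₂ k (fun h m => ρ (actComul act (u m) h) m) ?_ ?_ ?_ ?_,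
    fun h m x hx => indep (hu m) hx h⟩
  · intro h₁ h₂ m
    simp only [map_add, LinearMap.add_apply]
  · intro c h m
    simp only [map_smul, LinearMap.smul_apply]
  · intro h m₁ m₂
    obtain ⟨e, he₁, he₂⟩ := exists_common_left_unit hsu (u m₁) (u m₂)
    have h₁ := tmul_one_act_eq_self_of_mul_eq hpa hμ hρ (hu m₁) he₁
    have h₂ := tmul_one_act_eq_self_of_mul_eq hpa hμ hρ (hu m₂) he₂
    have h₁₂ : ρ (e ⊗ₜ[k] 1) (m₁ + m₂) = m₁ + m₂ := by rw [map_add, h₁, h₂]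
    rw [indep (hu _) h₁₂, indep (hu m₁) h₁, indep (hu m₂) h₂, map_add]
  · intro c h m
    have hc : ρ (u m ⊗ₜ[k] 1) (c • m) = c • m := by rw [map_smul, hu m]
    rw [indep (hu _) hc, map_smul]

theorem act_tmul_one_act_eq_pbhRhs (hpa : IsPartialAction k H act) (hμ : IsSmashMul act μ)
    (hρ : ∀ (u v : B ⊗[k] H) (m : M), ρ (μ u v) m = ρ u (ρ v m))
    (hsu : ∀ b : B, ∃ x : B, x * b = b) {χ : H →ₗ[k] M →ₗ[k] M}
    (hχ : ∀ (h : H) (m : M) (x : B), ρ (x ⊗ₜ[k] 1) m = m → χ h m = ρ (actComul act x h) m)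
    (h g : H) (a : B) {m : M} {x : B} (hx : ρ (x ⊗ₜ[k] 1) m = m) :
    χ h (ρ (a ⊗ₜ[k] 1) (χ g m)) =
      pbhRhs act (ρ.comp ((TensorProduct.mk k B H).flip 1)) χ h g a m := by
  obtain ⟨e, hea⟩ := hsu a
  have hunit : ρ (e ⊗ₜ[k] 1) (ρ (μ (a ⊗ₜ[k] 1) (actComul act x g)) m) =
      ρ (μ (a ⊗ₜ[k] 1) (actComul act x g)) m := by
    rw [← hρ, smash_tmul_one_smash_tmul_one hpa hμ, hea]
  rw [hχ g m x hx, ← hρ, hχ h _ e hunit, ← hρ,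
    smash_actComul_smash_tmul_one_actComul hpa hμ h g hea x, pbhRhs, sweedler, ← flip_apply,
    ← LinearMap.comp_apply (ρ.flip m), ← lift_compr₂]
  congr 1
  ext u t
  simp [hχ (t * g) m x hx, hρ]

end OfSmashModule

theorem mem_span_smashActionOf (hpa : IsPartialAction k H act) (hμ : IsSmashMul act μ)
    (hsu : ∀ b : B, ∃ x : B, x * b = b) (hχ1 : ∀ m : M, χ 1 m = m) (m : M)
    (hm : m ∈ Submodule.span k {x : M | ∃ (b : B) (m' : M), x = σ b m'}) :
    m ∈ Submodule.span k {x : M | ∃ p ∈ Submodule.span k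
      {x : B ⊗[k] H | ∃ (u : B ⊗[k] H) (b : B), x = μ u (b ⊗ₜ[k] (1 : H))},
      ∃ m' : M, x = smashActionOf σ χ p m'} := by
  refine Submodule.span_mono ?_ hm
  rintro _ ⟨b, m', rfl⟩
  obtain ⟨x, hxb⟩ := hsu b
  refine ⟨b ⊗ₜ[k] 1, Submodule.subset_span ⟨x ⊗ₜ[k] 1, b, ?_⟩, m', ?_⟩
  · rw [smash_tmul_one_tmul_one hpa hμ, hxb]
  · rw [smashActionOf_tmul, hχ1]

end PartialSmash

section Stmt9

variable {k : Type} [Field k] {H : Type} [Ring H] [HopfAlgebra k H]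
variable {B : Type} [NonUnitalRing B] [Module k B] [SMulCommClass k B B] [IsScalarTower k B B]

open PartialSmash in
/-- Let `B` be a left s-unital partial `H`-module algebra, with smash
product multiplication `μ` on `B ⊗ H` and partial smash product
`P = span {μ u (b ⊗ 1)}`.  (1) Every unital left `P`-module `M` becomes a partial
`(B,H)`-module via `b·m = (b ⊗ 1) ▷ m` and `h m = (Σ (h₁·x) ⊗ h₂) ▷ m` whenever `x m = m`;
(2) conversely every partial `(B,H)`-module is a unital `P`-module. -/
theorem sUnital_partial_smash_modules
    (act : H →ₗ[k] B →ₗ[k] B) (hpa : IsPartialAction k H act)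
    (hsu : ∀ b : B, ∃ x : B, x * b = b)
    (μ : (B ⊗[k] H) →ₗ[k] (B ⊗[k] H) →ₗ[k] (B ⊗[k] H))
    (hμ : ∀ (a : B) (h : H) (b : B) (g : H),
      μ (a ⊗ₜ[k] h) (b ⊗ₜ[k] g) = smashAux act a h b g)
    (P : Submodule k (B ⊗[k] H))
    (hP : P = Submodule.span k
      {x : B ⊗[k] H | ∃ (u : B ⊗[k] H) (b : B), x = μ u (b ⊗ₜ[k] (1 : H))})
    (M : Type) [AddCommGroup M] [Module k M] :
    -- (1) unital `P`-modules are partial `(B,H)`-modules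
    (∀ ρ : (B ⊗[k] H) →ₗ[k] M →ₗ[k] M,
      (∀ (u v : B ⊗[k] H) (m : M), ρ (μ u v) m = ρ u (ρ v m)) →
      (∀ m : M, m ∈ Submodule.span k {x : M | ∃ p ∈ P, ∃ m' : M, x = ρ p m'}) →
      -- the induced `B`-module structure is unital
      (∀ m : M, m ∈ Submodule.span k
          {x : M | ∃ (b : B) (m' : M), x = ρ (b ⊗ₜ[k] (1 : H)) m'}) ∧
      -- and there is an `H`-action making `M` a partial `(B,H)`-module
      ∃ χ : H →ₗ[k] M →ₗ[k] M,
        (∀ (h : H) (m : M) (x : B), ρ (x ⊗ₜ[k] (1 : H)) m = m →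
          χ h m = ρ (TensorProduct.map (act.flip x) LinearMap.id (Coalgebra.comul h)) m) ∧
        (∀ m : M, χ 1 m = m) ∧
        (∀ (h g : H) (a : B) (m : M),
          χ h (ρ (a ⊗ₜ[k] (1 : H)) (χ g m)) =
            pbhRhs act (ρ.comp ((TensorProduct.mk k B H).flip 1)) χ h g a m)) ∧
    -- (2) partial `(B,H)`-modules are unital `P`-modules
    (∀ (σ : B →ₗ[k] M →ₗ[k] M) (χ : H →ₗ[k] M →ₗ[k] M),
      (∀ (b c : B) (m : M), σ (b * c) m = σ b (σ c m)) →
      (∀ m : M, m ∈ Submodule.span k {x : M | ∃ (b : B) (m' : M), x = σ b m'}) →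
      (∀ m : M, χ 1 m = m) →
      (∀ (h g : H) (a : B) (m : M), χ h (σ a (χ g m)) = pbhRhs act σ χ h g a m) →
      ∃ ρ : (B ⊗[k] H) →ₗ[k] M →ₗ[k] M,
        (∀ (b : B) (h : H) (m : M), ρ (b ⊗ₜ[k] h) m = σ b (χ h m)) ∧
        (∀ (u v : B ⊗[k] H) (m : M), ρ (μ u v) m = ρ u (ρ v m)) ∧
        (∀ m : M, m ∈ Submodule.span k {x : M | ∃ p ∈ P, ∃ m' : M, x = ρ p m'})) := by
  subst hP
  refine ⟨fun ρ hρ hun => ?_, fun σ χ hσ hσun hχ1 hlaw => ?_⟩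
  · have hB m := mem_span_tmul_one_act hpa hμ hρ m (hun m)
    have hloc m := exists_tmul_one_act_eq_self hpa hμ hρ hsu m (hB m)
    obtain ⟨χ, hχ⟩ := exists_eq_actComul_act hpa hμ hρ hsu hloc
    refine ⟨hB, χ, hχ, fun m => ?_, fun h g a m => ?_⟩ <;> obtain ⟨x, hx⟩ := hloc m
    · rw [hχ 1 m x hx, actComul_one hpa, hx]
    · exact act_tmul_one_act_eq_pbhRhs hpa hμ hρ hsu hχ h g a hx
  · exact ⟨smashActionOf σ χ, smashActionOf_tmul, smashActionOf_smash hμ hσ hlaw,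
      fun m => mem_span_smashActionOf hpa hμ hsu hχ1 m (hσun m)⟩

end Stmt9
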